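/- arXiv:2407.18092 — 2 statements merged into one kernel-verified Lean document; each statement's English description precedes it below -/
import Mathlib

section
/- Consider the PB game with two projects p_1, p_2 and ten voters with plurality ballots such that |A(p_1)| = |A(p_2)| = 5, budget B = 10, delivery costs d(p_1) = 0 and d(p_2) = 6, and tie-breaking order p_2 ≻ p_1. This game has no AV/Cost-Nash equilibrium. Moreover, under the reversed tie-breaking order p_1 ≻ p_2, the strategy profile with c(p_1) = c(p_2) = 6 is an AV/Cost-Nash equilibrium in which only p_1 is funded. -/
/-
With equal approval counts, AV/Cost considers the cheaper project first (ties by the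
tie-breaking order), so with budget 10 a project is funded iff it comes first and costs at
most 10, or the two costs add up to at most 10.

Under p₂ ≻ p₁, project p₁ can get itself funded at any cost x ≤ 10 with x < c(p₂), and at
x = 10 - c(p₂). If c(p₂) > 10, an equilibrium forces c(p₁) = 10, and p₂ undercuts to 10,
winning the tie. If 5 < c(p₂) ≤ 10, the best cost c(p₂) for p₁ is not attained. If
c(p₂) ≤ 5, p₁ reports 10 - c(p₂), which funds p₂ below its delivery cost 6, so p₂ prefers
to drop out. Under p₁ ≻ p₂ at c ≡ 6, p₁ cannot be funded above 6 and p₂ only below 6.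
-/

open scoped Classical

set_option linter.unusedSectionVars false
set_option linter.unusedVariables false

noncomputable section

namespace PB

variable {P V : Type} [Fintype P] [DecidableEq P] [Fintype V] [DecidableEq V]

/-- The set of voters that approve project `p`. -/
def approvers (A : V → Finset P) (p : P) : Finset V :=
  Finset.univ.filter fun v => p ∈ A v

/-- A key whose second lexicographic component is an embedding into `ℕ` is injective. -/
lemma lexKey_inj {γ : Type} (g : P → γ) (tb : P ↪ ℕ) :
    Function.Injective fun p : P => toLex ((g p, tb p) : γ × ℕ) := by
  intro a b h
  have h2 : ((g a, tb a) : γ × ℕ) = (g b, tb b) := congrArg (fun x => ofLex x) h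
  exact tb.injective (congrArg Prod.snd h2)

/-- The list of all projects, sorted increasingly by an injective key. -/
def prioList {κ : Type} [LinearOrder κ] (key : P → κ) (hk : Function.Injective key) : List P :=
  letI : DecidableRel fun p q : P => key p ≤ key q :=
    fun a b => inferInstanceAs (Decidable (key a ≤ key b))
  letI : IsTrans P fun p q => key p ≤ key q := ⟨fun _ _ _ h1 h2 => le_trans h1 h2⟩
  letI : Std.Antisymm fun p q : P => key p ≤ key q := ⟨fun _ _ h1 h2 => hk (le_antisymm h1 h2)⟩
  letI : Std.Total fun p q : P => key p ≤ key q := ⟨fun _ _ => le_total _ _⟩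
  Finset.sort Finset.univ (fun p q => key p ≤ key q)

/-- Greedy selection of projects along a list: a project is added to the winning set
whenever its cost still fits into the remaining budget. -/
def greedy (cost : P → ℝ) : ℝ → List P → Finset P
  | _, [] => ∅
  | budget, p :: rest =>
      if cost p ≤ budget then insert p (greedy cost (budget - cost p) rest)
      else greedy cost budget rest

/-- The priority key of the BasicAV rule: nonincreasing approval score,
ties broken by the tie-breaking order `tb` (smaller `tb` value = preferred). -/
def basicAVkey (A : V → Finset P) (tb : P ↪ ℕ) (p : P) : ℕᵒᵈ ×ₗ ℕ :=
  toLex (OrderDual.toDual (approvers A p).card, tb p)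

/-- The BasicAV rule. -/
def basicAV (A : V → Finset P) (tb : P ↪ ℕ) (B : ℝ) (cost : P → ℝ) : Finset P :=
  greedy cost B (prioList (basicAVkey A tb) (lexKey_inj _ tb))

/-- The priority key of the AV/Cost rule: nonincreasing approval-to-cost ratio
(computed in `ℝ≥0∞`, so that zero-cost projects come first),
ties broken by the tie-breaking order `tb`. -/
def avCostKey (A : V → Finset P) (tb : P ↪ ℕ) (cost : P → ℝ) (p : P) : ENNRealᵒᵈ ×ₗ ℕ :=
  toLex (OrderDual.toDual (((approvers A p).card : ENNReal) / ENNReal.ofReal (cost p)), tb p)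

/-- The AV/Cost rule. -/
def avCost (A : V → Finset P) (tb : P ↪ ℕ) (B : ℝ) (cost : P → ℝ) : Finset P :=
  greedy cost B (prioList (avCostKey A tb cost) (lexKey_inj _ tb))

/-- The element of a nonempty finite set minimizing an injective key. -/
def argminBy {κ : Type} [LinearOrder κ] (key : P → κ) (hk : Function.Injective key)
    (R : Finset P) (hR : R.Nonempty) : P :=
  letI : LinearOrder P := LinearOrder.lift' key hk
  R.min' hR

lemma argminBy_mem {κ : Type} [LinearOrder κ] (key : P → κ) (hk : Function.Injective key)
    (R : Finset P) (hR : R.Nonempty) : argminBy key hk R hR ∈ R := by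
  letI : LinearOrder P := LinearOrder.lift' key hk
  exact Finset.min'_mem R hR

/-- The time at which the supporters of `p` (jointly earning one unit of money per
unit of time, currently holding the amounts given by `b`) will have collected
`cost p` money, measured from the current moment. -/
def phragTau (A : V → Finset P) (cost : P → ℝ) (b : V → ℝ) (p : P) : ℝ :=
  (cost p - ∑ v ∈ approvers A p, b v) / ((approvers A p).card : ℝ)

/-- One pass of the Phragmén rule: repeatedly take the remaining project whose
purchase event comes first (ties broken by `tb`); advance all bank accounts to that
moment; if the project fits in the remaining budget it is bought (and its supporters'
accounts are reset), otherwise it is removed from consideration. -/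
def phragmenAux (A : V → Finset P) (tb : P ↪ ℕ) (cost : P → ℝ) :
    Finset P → ℝ → (V → ℝ) → Finset P
  | R, budget, b =>
    if hR : R.Nonempty then
      let p := argminBy (fun p => toLex ((phragTau A cost b p, tb p) : ℝ × ℕ))
        (lexKey_inj _ tb) R hR
      have hp : p ∈ R := argminBy_mem _ _ _ _
      have hcard : (R.erase p).card < R.card := Finset.card_erase_lt_of_mem hp
      if cost p ≤ budget then
        insert p (phragmenAux A tb cost (R.erase p) (budget - cost p)
          (fun v => if v ∈ approvers A p then 0 else b v + phragTau A cost b p))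
      else
        phragmenAux A tb cost (R.erase p) budget (fun v => b v + phragTau A cost b p)
    else ∅
  termination_by R _ _ => R.card

/-- The Phragmén rule. -/
def phragmen (A : V → Finset P) (tb : P ↪ ℕ) (B : ℝ) (cost : P → ℝ) : Finset P :=
  phragmenAux A tb cost Finset.univ B (fun _ => 0)

/-- The set of coefficients `α` for which project `p` is exactly affordable, where
`contrib bv α c` is the amount a voter currently holding `bv` contributes towards a
project of cost `c` under coefficient `α`. -/
def affordSet (A : V → Finset P) (contrib : ℝ → ℝ → ℝ → ℝ) (cost : P → ℝ)
    (b : V → ℝ) (p : P) : Set ℝ :=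
  {α : ℝ | ∑ v ∈ approvers A p, contrib (b v) α (cost p) = cost p}

/-- One pass of the Method of Equal Shares, parametrized by the contribution
function `contrib`: repeatedly select, among the remaining affordable projects, the
one with the smallest affordability coefficient (ties broken by `tb`) and charge its
supporters accordingly; stop when no remaining project is affordable. -/
def mesAux (A : V → Finset P) (tb : P ↪ ℕ) (contrib : ℝ → ℝ → ℝ → ℝ) (cost : P → ℝ) :
    Finset P → (V → ℝ) → Finset P
  | R, b =>
    let F := R.filter fun p => (affordSet A contrib cost b p).Nonempty
    if hF : F.Nonempty then
      let p := argminBy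
        (fun p => toLex ((sInf (affordSet A contrib cost b p), tb p) : ℝ × ℕ))
        (lexKey_inj _ tb) F hF
      have hp : p ∈ R := Finset.mem_of_mem_filter p (argminBy_mem _ _ _ _)
      have hcard : (R.erase p).card < R.card := Finset.card_erase_lt_of_mem hp
      insert p (mesAux A tb contrib cost (R.erase p)
        (fun v => if v ∈ approvers A p then
            b v - contrib (b v) (sInf (affordSet A contrib cost b p)) (cost p)
          else b v))
    else ∅
  termination_by R _ => R.card

/-- The Method of Equal Shares with cost utilities: a voter holding `bv` contributes
`min bv (α * c)` towards a project of cost `c`. -/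
def mesCost (A : V → Finset P) (tb : P ↪ ℕ) (B : ℝ) (cost : P → ℝ) : Finset P :=
  mesAux A tb (fun bv α c => min bv (α * c)) cost Finset.univ
    (fun _ => B / (Fintype.card V : ℝ))

/-- The Method of Equal Shares with approval utilities: a voter holding `bv`
contributes `min bv α`. -/
def mesApr (A : V → Finset P) (tb : P ↪ ℕ) (B : ℝ) (cost : P → ℝ) : Finset P :=
  mesAux A tb (fun bv α _ => min bv α) cost Finset.univ
    (fun _ => B / (Fintype.card V : ℝ))

/-- The payoff of project `p` in the cost game: `cost p - d p` if `p` is funded,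
and `0` otherwise. -/
def payoff (d cost : P → ℝ) (W : Finset P) (p : P) : ℝ :=
  if p ∈ W then cost p - d p else 0

/-- `c` is a (pure) Nash equilibrium of the cost game with delivery costs `d` under
the PB rule `rule`: all reported costs are nonnegative and no project can strictly
increase its payoff by unilaterally reporting a different (nonnegative) cost. -/
def isNE (rule : (P → ℝ) → Finset P) (d : P → ℝ) (c : P → ℝ) : Prop :=
  (∀ p, 0 ≤ c p) ∧
  ∀ (p : P) (x : ℝ), 0 ≤ x →
    payoff d (Function.update c p x) (rule (Function.update c p x)) p ≤
      payoff d c (rule c) p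

/-- `tb` is an approval-to-delivery-cost (A/D) tie-breaking order: projects with zero
delivery cost come first, and among projects with positive delivery costs a strictly
larger approval-to-delivery-cost ratio means a strictly better position. -/
def isADOrder (A : V → Finset P) (d : P → ℝ) (tb : P ↪ ℕ) : Prop :=
  (∀ p q : P, d p = 0 → 0 < d q → tb p < tb q) ∧
  (∀ p q : P, 0 < d p → 0 < d q →
    ((approvers A q).card : ℝ) / d q < ((approvers A p).card : ℝ) / d p → tb p < tb q)

/-- The approval-proportional strategy profile. -/
def apProfile (A : V → Finset P) (B : ℝ) (p : P) : ℝ :=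
  B * (approvers A p).card / (∑ q : P, ((approvers A q).card : ℝ))

/-- Plurality preferences: every voter approves exactly one project. -/
def plurality (A : V → Finset P) : Prop := ∀ v, (A v).card = 1

/-- Party-list preferences: any two ballots are equal or disjoint. -/
def partyList (A : V → Finset P) : Prop := ∀ v w, A v = A w ∨ Disjoint (A v) (A w)

/-- The party of a project: all projects approved by exactly the same voters. -/
def party (A : V → Finset P) (p : P) : Finset P :=
  Finset.univ.filter fun q => approvers A q = approvers A p

end PB

/-- The plurality profile of the example: voters `0,…,4` approve project `0`
(this is `p₁`), voters `5,…,9` approve project `1` (this is `p₂`). -/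
def exA : Fin 10 → Finset (Fin 2) := fun v => if v.val < 5 then {0} else {1}

/-- Delivery costs: `d(p₁) = 0`, `d(p₂) = 6`. -/
def exD : Fin 2 → ℝ := fun i => if i = 0 then 0 else 6

/-- The tie-breaking order `p₂ ≻ p₁`. -/
def tb21 : Fin 2 ↪ ℕ := ⟨fun i => 1 - i.val, by decide⟩

/-- The tie-breaking order `p₁ ≻ p₂`. -/
def tb12 : Fin 2 ↪ ℕ := ⟨fun i => i.val, by decide⟩

namespace PB

section Priority

variable {P : Type} [Fintype P] [DecidableEq P]

theorem prioList_eq_of_pairwise {κ : Type} [LinearOrder κ] (key : P → κ)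
    (hk : Function.Injective key) {l : List P} (hl : l.Nodup) (huniv : l.toFinset = Finset.univ)
    (hsorted : l.Pairwise fun p q => key p ≤ key q) : prioList key hk = l := by
  have : IsTrans P fun p q => key p ≤ key q := ⟨fun _ _ _ => le_trans⟩
  have : Std.Antisymm fun p q : P => key p ≤ key q := ⟨fun _ _ h1 h2 => hk (le_antisymm h1 h2)⟩
  have : Std.Total fun p q : P => key p ≤ key q := ⟨fun _ _ => le_total _ _⟩
  unfold prioList
  rw [← huniv]
  exact (List.toFinset_sort _ hl).2 hsorted

theorem prioList_eq_pair {κ : Type} [LinearOrder κ] (key : P → κ) (hk : Function.Injective key)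
    {p q : P} (huniv : ({p, q} : Finset P) = Finset.univ) (hpq : key p < key q) :
    prioList key hk = [p, q] :=
  prioList_eq_of_pairwise key hk (by simpa using hpq.ne ∘ congrArg key)
    (by simpa using huniv) (by simpa using hpq.le)

end Priority

section Greedy

variable {P : Type} [DecidableEq P]

theorem mem_greedy_pair_left {c : P → ℝ} {B : ℝ} {p q : P} (hpq : p ≠ q) :
    p ∈ greedy c B [p, q] ↔ c p ≤ B := by
  simp only [greedy]
  split_ifs <;> simp [*]

theorem mem_greedy_pair_right {c : P → ℝ} {B : ℝ} {p q : P} (hpq : p ≠ q) :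
    q ∈ greedy c B [p, q] ↔ (c p ≤ B ∧ c q ≤ B - c p) ∨ (B < c p ∧ c q ≤ B) := by
  simp only [greedy]
  split_ifs <;> simp_all [hpq.symm]

end Greedy

theorem strictAntiOn_natCast_div_ofReal {n : ℕ} (hn : n ≠ 0) :
    StrictAntiOn (fun x : ℝ => (n : ENNReal) / ENNReal.ofReal x) (Set.Ici 0) :=
  fun x hx _ _ hxy => ENNReal.div_lt_div_left (by exact_mod_cast hn) (by simp)
    ((ENNReal.ofReal_lt_ofReal_iff_of_nonneg hx).2 hxy)

section AVCost

variable {P V : Type} [Fintype P] [DecidableEq P] [Fintype V]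
  {A : V → Finset P} {tb : P ↪ ℕ} {c : P → ℝ} {p q : P}

theorem avCostKey_lt_iff (hcard : (approvers A p).card = (approvers A q).card)
    (hpos : (approvers A p).card ≠ 0) (hp : 0 ≤ c p) (hq : 0 ≤ c q) :
    avCostKey A tb c p < avCostKey A tb c q ↔ c p < c q ∨ c p = c q ∧ tb p < tb q := by
  have hanti := strictAntiOn_natCast_div_ofReal hpos
  simp only [avCostKey, Prod.Lex.toLex_lt_toLex, OrderDual.toDual_lt_toDual, OrderDual.toDual_inj]
  rw [← hcard]
  exact or_congr (hanti.lt_iff_gt hq hp) (and_congr_left' (hanti.injOn.eq_iff hp hq))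

theorem mem_avCost_pair_iff {B : ℝ} (hpq : p ≠ q) (huniv : ({p, q} : Finset P) = Finset.univ)
    (hcard : (approvers A p).card = (approvers A q).card) (hpos : (approvers A p).card ≠ 0)
    (hp : 0 ≤ c p) (hq : 0 ≤ c q) :
    p ∈ avCost A tb B c ↔ ((c p < c q ∨ c p = c q ∧ tb p < tb q) ∧ c p ≤ B) ∨ c p + c q ≤ B := by
  have hinj : Function.Injective (avCostKey A tb c) := lexKey_inj _ tb
  change p ∈ greedy c B (prioList (avCostKey A tb c) hinj) ↔ _
  rcases lt_or_gt_of_ne (hinj.ne hpq) with hlt | hgt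
  · rw [prioList_eq_pair _ _ huniv hlt, mem_greedy_pair_left hpq,
      ← avCostKey_lt_iff hcard hpos hp hq]
    constructor
    · exact fun h => Or.inl ⟨hlt, h⟩
    · rintro (⟨-, h⟩ | h) <;> linarith
  · rw [Finset.pair_comm] at huniv
    rw [prioList_eq_pair _ _ huniv hgt, mem_greedy_pair_right hpq.symm,
      ← avCostKey_lt_iff hcard hpos hp hq]
    -- the project considered first is also the cheaper one
    have hqp : c q ≤ c p := by
      rcases (avCostKey_lt_iff hcard.symm (hcard ▸ hpos) hq hp).1 hgt with h | ⟨h, -⟩ <;> linarith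
    constructor
    · rintro (⟨-, h⟩ | ⟨h, h'⟩)
      · exact Or.inr (by linarith)
      · linarith
    · rintro (⟨h, -⟩ | h)
      · exact absurd h (lt_asymm hgt)
      · exact Or.inl ⟨by linarith, by linarith⟩

end AVCost

section Payoff

variable {P : Type} [DecidableEq P] {d c : P → ℝ} {W : Finset P} {p : P}

theorem payoff_of_mem (h : p ∈ W) : payoff d c W p = c p - d p := if_pos h

theorem payoff_of_not_mem (h : p ∉ W) : payoff d c W p = 0 := if_neg h

theorem mem_of_payoff_pos (h : 0 < payoff d c W p) : p ∈ W := by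
  by_contra hp
  rw [payoff_of_not_mem hp] at h
  exact h.false

theorem mem_and_le_of_pos_le_payoff {a : ℝ} (ha : 0 < a) (h : a ≤ payoff d c W p) :
    p ∈ W ∧ a ≤ c p - d p := by
  have hp := mem_of_payoff_pos (ha.trans_le h)
  exact ⟨hp, payoff_of_mem (d := d) (c := c) hp ▸ h⟩

theorem payoff_le {a : ℝ} (ha : 0 ≤ a) (h : p ∈ W → c p - d p ≤ a) : payoff d c W p ≤ a := by
  unfold payoff
  split_ifs with hp
  exacts [h hp, ha]

variable {rule : (P → ℝ) → Finset P} {x : ℝ}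

theorem isNE.sub_le_payoff (hne : isNE rule d c) (hx : 0 ≤ x)
    (hmem : p ∈ rule (Function.update c p x)) : x - d p ≤ payoff d c (rule c) p := by
  simpa [payoff_of_mem hmem] using hne.2 p x hx

theorem isNE.payoff_nonneg (hne : isNE rule d c) (hx : 0 ≤ x)
    (hmem : p ∉ rule (Function.update c p x)) : 0 ≤ payoff d c (rule c) p := by
  simpa [payoff_of_not_mem hmem] using hne.2 p x hx

theorem isNE.update_nonneg (hne : isNE rule d c) (hx : 0 ≤ x) :
    0 ≤ Function.update c p x :=
  le_update_iff.2 ⟨hx, fun j _ => hne.1 j⟩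

end Payoff

end PB

open PB

theorem card_approvers_exA (p : Fin 2) : (approvers exA p).card = 5 := by
  fin_cases p <;> decide

theorem mem_avCost_exA {tb : Fin 2 ↪ ℕ} {c : Fin 2 → ℝ} (hc : 0 ≤ c) {p q : Fin 2} (hpq : p ≠ q) :
    p ∈ avCost exA tb 10 c ↔
      ((c p < c q ∨ c p = c q ∧ tb p < tb q) ∧ c p ≤ 10) ∨ c p + c q ≤ 10 :=
  mem_avCost_pair_iff hpq (by fin_cases p <;> fin_cases q <;> first | decide | exact absurd rfl hpq)
    (by simp only [card_approvers_exA]) (by simp [card_approvers_exA]) (hc p) (hc q)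

theorem mem_avCost_tb21_zero {c : Fin 2 → ℝ} (hc : 0 ≤ c) :
    0 ∈ avCost exA tb21 10 c ↔ (c 0 < c 1 ∧ c 0 ≤ 10) ∨ c 0 + c 1 ≤ 10 := by
  simp [mem_avCost_exA hc zero_ne_one, tb21]

theorem mem_avCost_tb21_one {c : Fin 2 → ℝ} (hc : 0 ≤ c) :
    1 ∈ avCost exA tb21 10 c ↔ (c 1 ≤ c 0 ∧ c 1 ≤ 10) ∨ c 0 + c 1 ≤ 10 := by
  simp [mem_avCost_exA hc one_ne_zero, tb21, le_iff_lt_or_eq, eq_comm, add_comm]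

theorem mem_avCost_tb12_zero {c : Fin 2 → ℝ} (hc : 0 ≤ c) :
    0 ∈ avCost exA tb12 10 c ↔ (c 0 ≤ c 1 ∧ c 0 ≤ 10) ∨ c 0 + c 1 ≤ 10 := by
  simp [mem_avCost_exA hc zero_ne_one, tb12, le_iff_lt_or_eq]

theorem mem_avCost_tb12_one {c : Fin 2 → ℝ} (hc : 0 ≤ c) :
    1 ∈ avCost exA tb12 10 c ↔ (c 1 < c 0 ∧ c 1 ≤ 10) ∨ c 0 + c 1 ≤ 10 := by
  simp [mem_avCost_exA hc one_ne_zero, tb12, add_comm]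

section NoEquilibrium

variable {c : Fin 2 → ℝ}

theorem le_payoff_zero_of_isNE_tb21 (hne : isNE (avCost exA tb21 10) exD c) {x : ℝ} (hx : 0 ≤ x)
    (hfund : (x < c 1 ∧ x ≤ 10) ∨ x + c 1 ≤ 10) : x ≤ payoff exD c (avCost exA tb21 10 c) 0 := by
  have hmem : 0 ∈ avCost exA tb21 10 (Function.update c 0 x) :=
    (mem_avCost_tb21_zero (hne.update_nonneg hx)).2 (by simpa using hfund)
  simpa [exD] using hne.sub_le_payoff hx hmem

theorem payoff_one_nonneg_of_isNE_tb21 (hne : isNE (avCost exA tb21 10) exD c) :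
    0 ≤ payoff exD c (avCost exA tb21 10 c) 1 := by
  refine hne.payoff_nonneg (x := 11) (by norm_num) ?_
  rw [mem_avCost_tb21_one (hne.update_nonneg (by norm_num))]
  simp only [Function.update_self, Function.update_of_ne zero_ne_one]
  rintro (⟨-, h⟩ | h) <;> linarith [hne.1 0]

theorem cost_one_le_ten_of_isNE_tb21 (hne : isNE (avCost exA tb21 10) exD c) : c 1 ≤ 10 := by
  by_contra! h
  obtain ⟨hmem, hle⟩ := mem_and_le_of_pos_le_payoff (by norm_num)
    (le_payoff_zero_of_isNE_tb21 hne (x := 10) (by norm_num) (Or.inl ⟨h, le_rfl⟩))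
  simp only [exD, if_true, sub_zero] at hle
  have hc0 : c 0 = 10 := by
    rcases (mem_avCost_tb21_zero hne.1).1 hmem with ⟨-, h'⟩ | h' <;> linarith
  have hout : 1 ∉ avCost exA tb21 10 c := by
    rw [mem_avCost_tb21_one hne.1]
    rintro (⟨h', -⟩ | h') <;> linarith [hne.1 0]
  have hdev := hne.sub_le_payoff (p := 1) (x := 10) (by norm_num)
    ((mem_avCost_tb21_one (hne.update_nonneg (by norm_num))).2 (Or.inl (by simp [hc0])))
  rw [payoff_of_not_mem hout] at hdev
  norm_num [exD] at hdev

theorem five_lt_cost_one_of_isNE_tb21 (hne : isNE (avCost exA tb21 10) exD c) : 5 < c 1 := by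
  by_contra! h
  obtain ⟨hmem, hle⟩ := mem_and_le_of_pos_le_payoff (by linarith)
    (le_payoff_zero_of_isNE_tb21 hne (x := 10 - c 1) (by linarith) (Or.inr (by linarith)))
  simp only [exD, if_true, sub_zero] at hle
  have hsum : c 0 + c 1 ≤ 10 := by
    rcases (mem_avCost_tb21_zero hne.1).1 hmem with ⟨h', -⟩ | h' <;> linarith
  have hin : 1 ∈ avCost exA tb21 10 c := (mem_avCost_tb21_one hne.1).2 (Or.inr hsum)
  have hnn := payoff_one_nonneg_of_isNE_tb21 hne
  rw [payoff_of_mem hin] at hnn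
  norm_num [exD] at hnn
  linarith

theorem cost_one_not_mem_Ioc_of_isNE_tb21 (hne : isNE (avCost exA tb21 10) exD c) :
    c 1 ∉ Set.Ioc 5 10 := by
  rintro ⟨h5, h10⟩
  have hpay : c 1 ≤ payoff exD c (avCost exA tb21 10 c) 0 := by
    refine le_of_forall_lt_imp_le_of_dense fun x hx => ?_
    have hx' : max x 0 < c 1 := max_lt hx (by linarith)
    exact (le_max_left x 0).trans
      (le_payoff_zero_of_isNE_tb21 hne (le_max_right x 0) (Or.inl ⟨hx', hx'.le.trans h10⟩))
  obtain ⟨hmem, hle⟩ := mem_and_le_of_pos_le_payoff (by linarith) hpay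
  simp only [exD, if_true, sub_zero] at hle
  rcases (mem_avCost_tb21_zero hne.1).1 hmem with ⟨h', -⟩ | h' <;> linarith

theorem not_isNE_avCost_tb21 : ¬ isNE (avCost exA tb21 10) exD c := fun hne =>
  cost_one_not_mem_Ioc_of_isNE_tb21 hne
    ⟨five_lt_cost_one_of_isNE_tb21 hne, cost_one_le_ten_of_isNE_tb21 hne⟩

end NoEquilibrium

theorem avCost_tb12_six : avCost exA tb12 10 (fun _ => 6) = {0} := by
  have hc : (0 : Fin 2 → ℝ) ≤ fun _ => 6 := fun _ => by norm_num
  ext p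
  fin_cases p
  · norm_num [mem_avCost_tb12_zero hc]
  · norm_num [mem_avCost_tb12_one hc]

theorem isNE_avCost_tb12_six : isNE (avCost exA tb12 10) exD (fun _ => 6) := by
  refine ⟨fun _ => by norm_num, fun p x hx => ?_⟩
  have hc : 0 ≤ Function.update (fun _ : Fin 2 => (6 : ℝ)) p x :=
    le_update_iff.2 ⟨hx, fun _ _ => by norm_num⟩
  rw [avCost_tb12_six]
  fin_cases p <;> simp only [Fin.zero_eta, Fin.mk_one] at hc ⊢
  · rw [payoff_of_mem (W := {0}) (Finset.mem_singleton_self _)]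
    refine payoff_le (by norm_num [exD]) fun h => ?_
    rw [mem_avCost_tb12_zero hc] at h
    norm_num [exD] at h ⊢
    rcases h with ⟨h, -⟩ | h <;> linarith
  · rw [payoff_of_not_mem (W := {0}) (by simp)]
    refine payoff_le le_rfl fun h => ?_
    rw [mem_avCost_tb12_one hc] at h
    norm_num [exD] at h ⊢
    rcases h with ⟨h, -⟩ | h <;> linarith

/-- With budget `10`, plurality ballots with `|A(p₁)| = |A(p₂)| = 5`,
delivery costs `d(p₁) = 0`, `d(p₂) = 6` and tie-breaking `p₂ ≻ p₁`, the game has no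
AV/Cost-Nash equilibrium; under the reversed tie-breaking `p₁ ≻ p₂` the profile
`c ≡ 6` is an AV/Cost-Nash equilibrium in which only `p₁` is funded. -/
theorem avCost_no_NE_example :
    (¬ ∃ c : Fin 2 → ℝ, PB.isNE (PB.avCost exA tb21 10) exD c) ∧
    PB.isNE (PB.avCost exA tb12 10) exD (fun _ => 6) ∧
    PB.avCost exA tb12 10 (fun _ => 6) = {0} :=
  ⟨fun ⟨_, hne⟩ => not_isNE_avCost_tb21 hne, isNE_avCost_tb12_six, avCost_tb12_six⟩
end
end

section
/- For every PB game (P,V,B,d) with party-list ballots and zero delivery costs (d ≡ 0), and every tie-breaking order, there exists a MES-Apr-Nash equilibrium; in particular, the strategy profile in which each project p reports c(p) = B·|A(p)|/(|V|·|party(p)|) is a MES-Apr-Nash equilibrium. -/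
open scoped Classical

set_option linter.unusedSectionVars false
set_option linter.unusedVariables false

noncomputable section

/-! Under party-list ballots MES-Apr never spends a party's money on another party's projects,
and it charges the supporters of a project equally as long as their balances agree. In the profile
`c` the `|party p|` projects of a party cost `c p` each, together exactly the `|A(p)| · B/|V|` the
party owns. Hence, while the other projects of `p`'s party report `c p`, the supporters of `p` hold
equal balances worth `c p` per remaining project of the party: buying one of these at `c p`
preserves this, and buying a project of another party does not touch it. So a report `x ≤ c p` gets
`p` funded, while a report `x > c p` loses to the cheaper projects of its party until only `p` is
left, with exactly `c p` money. Thus `p` is funded iff `x ≤ c p`, and no deviation pays. -/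

namespace PB

open Finset

variable {P V : Type} [Fintype P] [DecidableEq P] [Fintype V] [DecidableEq V]

lemma argminBy_le {κ : Type} [LinearOrder κ] {key : P → κ} (hk : Function.Injective key)
    {R : Finset P} (hR : R.Nonempty) {r : P} (hr : r ∈ R) :
    key (argminBy key hk R hR) ≤ key r := by
  let _ : LinearOrder P := LinearOrder.lift' key hk
  exact min'_le R r hr

section mesAux

variable (A : V → Finset P) (tb : P ↪ ℕ) (contrib : ℝ → ℝ → ℝ → ℝ) (cost : P → ℝ)

lemma mesAux_eq_empty {R : Finset P} {b : V → ℝ}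
    (h : ∀ r ∈ R, ¬(affordSet A contrib cost b r).Nonempty) :
    mesAux A tb contrib cost R b = ∅ := by
  rw [mesAux, dif_neg]
  simpa [filter_nonempty_iff] using h

lemma exists_mesAux_eq_insert {R : Finset P} {b : V → ℝ}
    (h : ∃ r ∈ R, (affordSet A contrib cost b r).Nonempty) :
    ∃ q ∈ R, (affordSet A contrib cost b q).Nonempty ∧
      (∀ r ∈ R, (affordSet A contrib cost b r).Nonempty →
        sInf (affordSet A contrib cost b q) ≤ sInf (affordSet A contrib cost b r)) ∧
      mesAux A tb contrib cost R b = insert q (mesAux A tb contrib cost (R.erase q)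
        fun v => if v ∈ approvers A q then
          b v - contrib (b v) (sInf (affordSet A contrib cost b q)) (cost q) else b v) := by
  have hF : (R.filter fun r => (affordSet A contrib cost b r).Nonempty).Nonempty := by
    simpa [filter_nonempty_iff] using h
  have hq := mem_filter.1 (argminBy_mem
    (fun r => toLex ((sInf (affordSet A contrib cost b r), tb r) : ℝ × ℕ)) (lexKey_inj _ tb) _ hF)
  refine ⟨_, hq.1, hq.2, fun r hr hra => ?_, by rw [mesAux, dif_pos hF]⟩
  exact Prod.Lex.monotone_fst _ _ (argminBy_le
    (key := fun r => toLex ((sInf (affordSet A contrib cost b r), tb r) : ℝ × ℕ))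
    (lexKey_inj _ tb) hF (mem_filter.2 ⟨hr, hra⟩))

end mesAux

lemma isLeast_setOf_mul_min_eq {n β c : ℝ} (hn : 0 < n) (h : c ≤ n * β) :
    IsLeast {α | n * min β α = c} (c / n) := by
  have hcn : c / n ≤ β := by rwa [div_le_iff₀ hn, mul_comm]
  refine ⟨by simp [min_eq_right hcn, mul_div_cancel₀ c hn.ne'], fun α hα => ?_⟩
  have hmin : min β α = c / n := by
    rw [eq_div_iff hn.ne', mul_comm]
    exact hα
  exact hmin ▸ min_le_right β α

lemma nonempty_setOf_mul_min_eq_iff {n β c : ℝ} (hn : 0 < n) :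
    {α | n * min β α = c}.Nonempty ↔ c ≤ n * β := by
  refine ⟨fun ⟨α, (hα : n * min β α = c)⟩ => ?_, fun h => ⟨_, (isLeast_setOf_mul_min_eq hn h).1⟩⟩
  exact hα ▸ mul_le_mul_of_nonneg_left (min_le_left β α) hn.le

section apr

variable {A : V → Finset P} {cost : P → ℝ} {b : V → ℝ} {q : P} {β : ℝ}

lemma affordSet_apr_of_forall_eq (hb : ∀ v ∈ approvers A q, b v = β) :
    affordSet A (fun bv α _ => min bv α) cost b q =
      {α | (#(approvers A q) : ℝ) * min β α = cost q} := by
  ext α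
  change ∑ v ∈ approvers A q, min (b v) α = cost q ↔ _
  rw [sum_congr rfl (g := fun _ => min β α) fun v hv => by rw [hb v hv], sum_const, nsmul_eq_mul]
  exact Iff.rfl

lemma affordSet_apr_nonempty_iff (hS : (approvers A q).Nonempty)
    (hb : ∀ v ∈ approvers A q, b v = β) :
    (affordSet A (fun bv α _ => min bv α) cost b q).Nonempty ↔
      cost q ≤ #(approvers A q) * β := by
  rw [affordSet_apr_of_forall_eq hb]
  exact nonempty_setOf_mul_min_eq_iff (by exact_mod_cast hS.card_pos)

lemma csInf_affordSet_apr (hS : (approvers A q).Nonempty) (hb : ∀ v ∈ approvers A q, b v = β)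
    (h : cost q ≤ #(approvers A q) * β) :
    sInf (affordSet A (fun bv α _ => min bv α) cost b q) = cost q / #(approvers A q) := by
  rw [affordSet_apr_of_forall_eq hb]
  exact (isLeast_setOf_mul_min_eq (by exact_mod_cast hS.card_pos) h).csInf_eq

end apr

section partyList

variable {A : V → Finset P}

lemma mem_party {p q : P} : q ∈ party A p ↔ approvers A q = approvers A p := by
  simp [party]

lemma approvers_eq_of_mem (hpl : partyList A) {p q : P} {v : V}
    (hp : v ∈ approvers A p) (hq : v ∈ approvers A q) : approvers A p = approvers A q := by
  simp only [approvers, mem_filter, mem_univ, true_and] at hp hq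
  ext w
  simp only [approvers, mem_filter, mem_univ, true_and]
  rcases hpl w v with h | h
  · rw [h]
    exact iff_of_true hp hq
  · exact iff_of_false (fun hw => disjoint_left.1 h hw hp) (fun hw => disjoint_left.1 h hw hq)

variable {tb : P ↪ ℕ} {cost : P → ℝ} {p : P} {t : ℝ}

lemma cost_le_of_minimal_sInf_affordSet_apr (hS : (approvers A p).Nonempty) (ht : 0 ≤ t)
    (hparty : ∀ q ∈ party A p, q ≠ p → cost q = t) {R : Finset P} {b : V → ℝ} {β : ℝ}
    (hb : ∀ v ∈ approvers A p, b v = β)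
    (hbal : (#(approvers A p) : ℝ) * β = #(R ∩ party A p) * t)
    (hpaff : (affordSet A (fun bv α _ => min bv α) cost b p).Nonempty)
    (hpmin : ∀ r ∈ R, (affordSet A (fun bv α _ => min bv α) cost b r).Nonempty →
      sInf (affordSet A (fun bv α _ => min bv α) cost b p) ≤
        sInf (affordSet A (fun bv α _ => min bv α) cost b r)) :
    cost p ≤ t := by
  have hSpos : (0 : ℝ) < #(approvers A p) := by exact_mod_cast hS.card_pos
  have hpβ := (affordSet_apr_nonempty_iff hS hb).1 hpaff
  rcases le_or_gt #(R ∩ party A p) 1 with hk | hk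
  · have hk' : (#(R ∩ party A p) : ℝ) ≤ 1 := by exact_mod_cast hk
    nlinarith
  obtain ⟨q, hq, hqp⟩ := exists_mem_ne hk p
  obtain ⟨hqR, hqp'⟩ := mem_inter.1 hq
  have hAq := mem_party.1 hqp'
  have hbq : ∀ v ∈ approvers A q, b v = β := hAq ▸ hb
  have hSq : (approvers A q).Nonempty := hAq ▸ hS
  have hqβ : cost q ≤ #(approvers A q) * β := by
    have hk' : (1 : ℝ) ≤ #(R ∩ party A p) := by exact_mod_cast hk.le
    rw [hAq, hbal, hparty q hqp' hqp]
    nlinarith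
  have key := hpmin q hqR ((affordSet_apr_nonempty_iff hSq hbq).2 hqβ)
  rw [csInf_affordSet_apr hS hb hpβ, csInf_affordSet_apr hSq hbq hqβ, hAq,
    hparty q hqp' hqp] at key
  exact (div_le_div_iff_of_pos_right hSpos).1 key

theorem mem_mesAux_apr_iff (hpl : partyList A) (hS : (approvers A p).Nonempty) (ht : 0 ≤ t)
    (hparty : ∀ q ∈ party A p, q ≠ p → cost q = t) (R : Finset P) (b : V → ℝ) (β : ℝ)
    (hpR : p ∈ R) (hb : ∀ v ∈ approvers A p, b v = β)
    (hbal : (#(approvers A p) : ℝ) * β = #(R ∩ party A p) * t) :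
    p ∈ mesAux A tb (fun bv α _ => min bv α) cost R b ↔ cost p ≤ t := by
  induction R using Finset.strongInduction generalizing b β with
  | H R ih =>
  have hk : (1 : ℝ) ≤ #(R ∩ party A p) := by
    exact_mod_cast card_pos.2 ⟨p, mem_inter.2 ⟨hpR, mem_party.2 rfl⟩⟩
  have htβ : t ≤ #(approvers A p) * β := by
    rw [hbal]
    nlinarith
  by_cases hF : ∃ r ∈ R, (affordSet A (fun bv α _ => min bv α) cost b r).Nonempty
  swap
  · simp only [not_exists, not_and] at hF
    rw [mesAux_eq_empty A tb _ cost hF]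
    refine iff_of_false (notMem_empty p) fun hpt => hF p hpR ?_
    exact (affordSet_apr_nonempty_iff hS hb).2 (hpt.trans htβ)
  obtain ⟨q, hqR, hqaff, hqmin, heq⟩ := exists_mesAux_eq_insert A tb _ cost hF
  rw [heq, mem_insert]
  rcases eq_or_ne q p with rfl | hqp
  · exact iff_of_true (Or.inl rfl)
      (cost_le_of_minimal_sInf_affordSet_apr hS ht hparty hb hbal hqaff hqmin)
  rw [or_iff_right hqp.symm]
  have hpR' : p ∈ R.erase q := mem_erase.2 ⟨hqp.symm, hpR⟩
  by_cases hq : q ∈ party A p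
  · have hAq := mem_party.1 hq
    have hcq := hparty q hq hqp
    have hqβ : cost q ≤ #(approvers A q) * β := by rwa [hAq, hcq]
    have htS : t / #(approvers A p) ≤ β := by
      rwa [div_le_iff₀ (by exact_mod_cast hS.card_pos), mul_comm]
    refine ih _ (erase_ssubset hqR) _ (β - t / #(approvers A p)) hpR' (fun v hv => ?_) ?_
    · rw [if_pos (hAq ▸ hv), csInf_affordSet_apr (hAq ▸ hS) (hAq ▸ hb) hqβ, hb v hv, hAq, hcq,
        min_eq_right htS]
    · have hS0 : (#(approvers A p) : ℝ) ≠ 0 := by exact_mod_cast hS.card_pos.ne'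
      rw [erase_inter, card_erase_of_mem (mem_inter.2 ⟨hqR, hq⟩),
        Nat.cast_sub (by exact_mod_cast hk), mul_sub, hbal, mul_div_cancel₀ t hS0]
      push_cast
      ring
  · refine ih _ (erase_ssubset hqR) _ β hpR' (fun v hv => ?_) ?_
    · rw [if_neg fun hv' => hq (mem_party.2 (approvers_eq_of_mem hpl hv' hv)), hb v hv]
    · rwa [erase_inter, erase_eq_of_notMem fun h => hq (mem_inter.1 h).2]

theorem mem_mesApr_update_iff (hpl : partyList A) (happr : ∀ p, (approvers A p).Nonempty)
    {B : ℝ} {c : P → ℝ} (hc0 : ∀ p, 0 ≤ c p) (hparty : ∀ p, ∀ q ∈ party A p, c q = c p)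
    (hbudget : ∀ p, (#(approvers A p) : ℝ) * (B / Fintype.card V) = #(party A p) * c p)
    (p : P) (x : ℝ) : p ∈ mesApr A tb B (Function.update c p x) ↔ x ≤ c p := by
  have h := mem_mesAux_apr_iff (tb := tb) (cost := Function.update c p x) hpl (happr p) (hc0 p)
    (fun q hq hqp => by rw [Function.update_of_ne hqp, hparty p q hq]) univ
    (fun _ => B / Fintype.card V) _ (mem_univ p) (fun _ _ => rfl) (by rw [univ_inter, hbudget])
  rwa [Function.update_self] at h

end partyList

lemma isNE_zero_of_mem_update_iff {rule : (P → ℝ) → Finset P} {c : P → ℝ} (hc0 : ∀ p, 0 ≤ c p)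
    (h : ∀ p x, p ∈ rule (Function.update c p x) ↔ x ≤ c p) : isNE rule (fun _ => 0) c := by
  refine ⟨hc0, fun p x _ => ?_⟩
  have hp : p ∈ rule c := by simpa using h p (c p)
  simp only [payoff, hp, if_true, Function.update_self, sub_zero]
  split_ifs with hx
  · exact (h p x).1 hx
  · exact hc0 p

end PB

theorem mesApr_NE_partyList_zero_delivery_general
    {P V : Type} [Fintype P] [DecidableEq P] [Fintype V] [DecidableEq V]
    (A : V → Finset P) (tb : P ↪ ℕ) (B : ℝ)
    (hB : 0 < B) (hpl : PB.partyList A)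
    (happr : ∀ p, (PB.approvers A p).Nonempty) :
    (∃ c : P → ℝ, PB.isNE (PB.mesApr A tb B) (fun _ => 0) c) ∧
    PB.isNE (PB.mesApr A tb B) (fun _ => 0)
      (fun p => B * ((PB.approvers A p).card : ℝ) /
        ((Fintype.card V : ℝ) * ((PB.party A p).card : ℝ))) := by
  suffices hNE : PB.isNE (PB.mesApr A tb B) (fun _ => 0)
      (fun p => B * ((PB.approvers A p).card : ℝ) /
        ((Fintype.card V : ℝ) * ((PB.party A p).card : ℝ))) from ⟨⟨_, hNE⟩, hNE⟩
  have hc0 : ∀ p, 0 ≤ B * ((PB.approvers A p).card : ℝ) /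
      ((Fintype.card V : ℝ) * ((PB.party A p).card : ℝ)) := fun p => by positivity
  refine PB.isNE_zero_of_mem_update_iff hc0 (PB.mem_mesApr_update_iff hpl happr hc0 ?_ ?_)
  · intro p q hq
    have hAq := PB.mem_party.1 hq
    have hparty : PB.party A q = PB.party A p := by simp only [PB.party, hAq]
    simp only [hAq, hparty]
  · intro p
    have hV : (Fintype.card V : ℝ) ≠ 0 := by
      obtain ⟨v, -⟩ := happr p
      exact_mod_cast (Fintype.card_pos_iff.2 ⟨v⟩).ne'
    have hparty : ((PB.party A p).card : ℝ) ≠ 0 := by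
      exact_mod_cast (Finset.card_pos.2 ⟨p, PB.mem_party.2 rfl⟩).ne'
    field_simp

/-- For party-list ballots and zero delivery costs, a MES-Apr-Nash
equilibrium always exists; in particular, the profile in which each project `p`
reports `B·|A(p)| / (|V|·|party(p)|)` is a MES-Apr-Nash equilibrium. -/
theorem mesApr_NE_partyList_zero_delivery
    {P V : Type} [Fintype P] [DecidableEq P] [Fintype V] [DecidableEq V] [Nonempty V]
    (A : V → Finset P) (tb : P ↪ ℕ) (B : ℝ)
    (hB : 0 < B) (hpl : PB.partyList A)
    (hballots : ∀ v, (A v).Nonempty)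
    (happr : ∀ p, (PB.approvers A p).Nonempty) :
    (∃ c : P → ℝ, PB.isNE (PB.mesApr A tb B) (fun _ => 0) c) ∧
    PB.isNE (PB.mesApr A tb B) (fun _ => 0)
      (fun p => B * ((PB.approvers A p).card : ℝ) /
        ((Fintype.card V : ℝ) * ((PB.party A p).card : ℝ))) :=
  mesApr_NE_partyList_zero_delivery_general A tb B hB hpl happr
end
end
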